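/- arXiv:2506.07346 — 4 statements merged into one kernel-verified Lean document; each statement's English description precedes it below -/
import Mathlib

section
/- Let h : ℝ → ℝ be continuous with H(t) = ∫_0^t h(τ) dτ, assume lim_{t→0} h(t)/t = 0, and assume the map t ↦ (h(t)t − 2H(t)) / (|t|^5 t) is nondecreasing on (−∞,0) and on (0,+∞) (condition (h3) with N = 2). Then 6 H(s) ≤ s h(s) for every s ∈ ℝ. -/
open Filter Topology

lemma key (h H : ℝ → ℝ) (hcont : Continuous h)
    (hH : ∀ t : ℝ, H t = ∫ τ in (0:ℝ)..t, h τ)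
    (h0 : Tendsto (fun t : ℝ => h t / t) (𝓝[≠] 0) (𝓝 0))
    (h3pos : MonotoneOn (fun t : ℝ => (h t * t - 2 * H t) / (|t| ^ (5:ℕ) * t)) (Set.Ioi 0))
    {s : ℝ} (hs : 0 < s) : 6 * H s ≤ s * h s := by
  -- derivative of H
  have hderiv : ∀ t : ℝ, HasDerivAt H (h t) t := by
    intro t
    have hd : HasDerivAt (fun u => ∫ τ in (0:ℝ)..u, h τ) (h t) t :=
      intervalIntegral.integral_hasDerivAt_right (hcont.intervalIntegrable 0 t)
        (hcont.stronglyMeasurableAtFilter _ _) hcont.continuousAt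
    have hfun : H = fun u => ∫ τ in (0:ℝ)..u, h τ := funext hH
    rw [hfun]; exact hd
  have hHcont : Continuous H := by
    have := fun t => (hderiv t).continuousAt
    exact continuous_iff_continuousAt.2 this
  -- h 0 = 0
  have hzero : h 0 = 0 := by
    have h1 : Tendsto (fun t : ℝ => h t / t * t) (𝓝[≠] (0:ℝ)) (𝓝 0) := by
      simpa using h0.mul (tendsto_id.mono_left nhdsWithin_le_nhds)
    have h2 : Tendsto h (𝓝[≠] (0:ℝ)) (𝓝 0) := by
      refine h1.congr' ?_
      filter_upwards [self_mem_nhdsWithin] with t ht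
      exact div_mul_cancel₀ _ ht
    have h3 : Tendsto h (𝓝[≠] (0:ℝ)) (𝓝 (h 0)) :=
      (hcont.tendsto 0).mono_left nhdsWithin_le_nhds
    exact tendsto_nhds_unique h3 h2
  -- H t / t^2 → 0 as t → 0+
  have Htends : Tendsto (fun t : ℝ => H t / t ^ 2) (𝓝[>] (0:ℝ)) (𝓝 0) := by
    rw [Metric.tendsto_nhdsWithin_nhds]
    intro ε hε
    obtain ⟨δ, hδ, hδ'⟩ := Metric.tendsto_nhdsWithin_nhds.1 h0 (ε / 2) (by positivity)
    refine ⟨δ, hδ, fun t ht hdist => ?_⟩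
    have ht0 : (0:ℝ) < t := ht
    have habs : ∀ τ ∈ Set.uIoc (0:ℝ) t, ‖h τ‖ ≤ ε / 2 * t := by
      intro τ hτ
      rw [Set.uIoc_of_le ht0.le] at hτ
      have hτ0 : 0 < τ := hτ.1
      have hτt : τ ≤ t := hτ.2
      have hτδ : dist τ 0 < δ := by
        rw [Real.dist_eq, sub_zero, abs_of_pos hτ0]
        rw [Real.dist_eq, sub_zero, abs_of_pos ht0] at hdist
        linarith
      have hq := hδ' (Set.mem_compl_singleton_iff.2 hτ0.ne') hτδ
      rw [Real.dist_eq, sub_zero, abs_div] at hq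
      have hq2 : |h τ| ≤ ε / 2 * τ := by
        have h1 : |h τ| = |h τ| / |τ| * |τ| :=
          (div_mul_cancel₀ _ (abs_ne_zero.2 hτ0.ne')).symm
        rw [h1]
        calc |h τ| / |τ| * |τ| ≤ ε / 2 * |τ| :=
              mul_le_mul_of_nonneg_right hq.le (abs_nonneg _)
          _ = ε / 2 * τ := by rw [abs_of_pos hτ0]
      have : ‖h τ‖ = |h τ| := rfl
      rw [this]
      nlinarith
    have hbound : ‖∫ τ in (0:ℝ)..t, h τ‖ ≤ ε / 2 * t * |t - 0| :=
      intervalIntegral.norm_integral_le_of_norm_le_const habs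
    rw [sub_zero, abs_of_pos ht0] at hbound
    rw [Real.dist_eq, sub_zero, hH t]
    have : |(∫ τ in (0:ℝ)..t, h τ) / t ^ 2| ≤ ε / 2 := by
      rw [abs_div]
      rw [div_le_iff₀ (by positivity)]
      calc |∫ τ in (0:ℝ)..t, h τ| ≤ ε / 2 * t * t := hbound
      _ = ε / 2 * |t ^ 2| := by rw [abs_of_pos (by positivity : (0:ℝ) < t ^ 2)]; ring
    linarith [this]
  -- main argument
  set c : ℝ := (h s * s - 2 * H s) / (|s| ^ (5:ℕ) * s) with hc
  set u : ℝ → ℝ := fun t => H t / t ^ 2 - c / 4 * t ^ 4 with hu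
  have hs6 : |s| ^ (5:ℕ) * s = s ^ 6 := by rw [abs_of_pos hs]; ring
  have hud : ∀ t : ℝ, t ≠ 0 →
      HasDerivAt u ((h t * t - 2 * H t) / t ^ 3 - c * t ^ 3) t := by
    intro t ht
    have h1 : HasDerivAt (fun t : ℝ => H t / t ^ 2)
        ((h t * t ^ 2 - H t * (2 * t ^ 1)) / (t ^ 2) ^ 2) t := by
      have := (hderiv t).div (hasDerivAt_pow 2 t) (pow_ne_zero 2 ht)
      refine this.congr_deriv ?_
      norm_num
    have h2 : HasDerivAt (fun t : ℝ => c / 4 * t ^ 4) (c / 4 * (4 * t ^ 3)) t := by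
      simpa using (hasDerivAt_pow 4 t).const_mul (c / 4)
    have h3 := h1.sub h2
    refine h3.congr_deriv ?_
    rw [show (t ^ 2) ^ 2 = t ^ 3 * t by ring,
      show h t * t ^ 2 - H t * (2 * t ^ 1) = (h t * t - 2 * H t) * t by ring,
      mul_div_mul_right _ _ ht]
    ring
  have hanti : AntitoneOn u (Set.Ioc 0 s) := by
    apply antitoneOn_of_deriv_nonpos (convex_Ioc 0 s)
    · apply ContinuousOn.sub
      · exact hHcont.continuousOn.div (continuous_pow 2).continuousOn
          (fun t ht => pow_ne_zero 2 (ne_of_gt ht.1))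
      · exact Continuous.continuousOn (by continuity)
    · intro t ht
      rw [interior_Ioc] at ht
      exact ((hud t (ne_of_gt ht.1)).differentiableAt).differentiableWithinAt
    · intro t ht
      rw [interior_Ioc] at ht
      have ht0 : 0 < t := ht.1
      rw [(hud t ht0.ne').deriv]
      have hgt : (h t * t - 2 * H t) / (|t| ^ (5:ℕ) * t) ≤ c :=
        h3pos ht.1 hs ht.2.le
      have ht6 : |t| ^ (5:ℕ) * t = t ^ 6 := by rw [abs_of_pos ht0]; ring
      rw [ht6] at hgt
      have key3 : (h t * t - 2 * H t) / t ^ 3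
          = ((h t * t - 2 * H t) / t ^ 6) * t ^ 3 := by
        field_simp
      rw [key3]
      have hmul := mul_le_mul_of_nonneg_right hgt
        (by positivity : (0:ℝ) ≤ t ^ 3)
      linarith
  have hmem : ∀ᶠ t in 𝓝[>] (0:ℝ), u s ≤ u t := by
    filter_upwards [Ioc_mem_nhdsGT_of_mem ⟨le_refl 0, hs⟩] with t ht
    exact hanti ht (Set.right_mem_Ioc.2 hs) ht.2
  have hulim : Tendsto u (𝓝[>] (0:ℝ)) (𝓝 0) := by
    have hc2 : Tendsto (fun t : ℝ => c / 4 * t ^ 4) (𝓝[>] (0:ℝ)) (𝓝 0) := by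
      have hcn : Continuous fun t : ℝ => c / 4 * t ^ 4 := by continuity
      have := (hcn.tendsto 0).mono_left (nhdsWithin_le_nhds :
        𝓝[>] (0:ℝ) ≤ 𝓝 0)
      simpa using this
    simpa using Htends.sub hc2
  have hus : u s ≤ 0 := ge_of_tendsto hulim hmem
  have hus' : H s / s ^ 2 ≤ c / 4 * s ^ 4 := by
    have : H s / s ^ 2 - c / 4 * s ^ 4 ≤ 0 := hus
    linarith
  have hHs : H s ≤ c / 4 * s ^ 6 := by
    rw [div_le_iff₀ (by positivity : (0:ℝ) < s ^ 2)] at hus'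
    calc H s ≤ c / 4 * s ^ 4 * s ^ 2 := hus'
      _ = c / 4 * s ^ 6 := by ring
  have hcs : c * s ^ 6 = h s * s - 2 * H s := by
    rw [hc, hs6]
    field_simp
  nlinarith [hHs, hcs]

/-- Under (h3) with `N = 2` and `h(t) = o(t)` at `0`, one has `6H(s) ≤ s h(s)`. -/
theorem stmt_13 (h H : ℝ → ℝ) (hcont : Continuous h)
    (hH : ∀ t : ℝ, H t = ∫ τ in (0:ℝ)..t, h τ)
    (h0 : Tendsto (fun t : ℝ => h t / t) (𝓝[≠] 0) (𝓝 0))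
    (h3neg : MonotoneOn (fun t : ℝ => (h t * t - 2 * H t) / (|t| ^ (5:ℕ) * t)) (Set.Iio 0))
    (h3pos : MonotoneOn (fun t : ℝ => (h t * t - 2 * H t) / (|t| ^ (5:ℕ) * t)) (Set.Ioi 0)) :
    ∀ s : ℝ, 6 * H s ≤ s * h s := by
  intro s
  rcases lt_trichotomy s 0 with hneg | rfl | hpos
  · set h' : ℝ → ℝ := fun t => -h (-t) with hh'
    set H' : ℝ → ℝ := fun t => H (-t) with hH'def
    have hcont' : Continuous h' := (hcont.comp continuous_neg).neg
    have hHrefl : ∀ t : ℝ, H' t = ∫ τ in (0:ℝ)..t, h' τ := by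
      intro t
      have h1 : (∫ τ in (0:ℝ)..t, h (-τ)) = ∫ τ in (-t)..(0:ℝ), h τ := by
        simpa using intervalIntegral.integral_comp_neg (a := 0) (b := t) h
      calc H' t = ∫ τ in (0:ℝ)..(-t), h τ := hH (-t)
        _ = -∫ τ in (-t)..(0:ℝ), h τ := intervalIntegral.integral_symm _ _
        _ = -∫ τ in (0:ℝ)..t, h (-τ) := by rw [h1]
        _ = ∫ τ in (0:ℝ)..t, h' τ := by
            rw [← intervalIntegral.integral_neg]
    have hnegt : Tendsto (fun t : ℝ => -t) (𝓝[≠] (0:ℝ)) (𝓝[≠] (0:ℝ)) := by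
      rw [tendsto_nhdsWithin_iff]
      constructor
      · simpa using (continuous_neg.tendsto (0:ℝ)).mono_left nhdsWithin_le_nhds
      · filter_upwards [self_mem_nhdsWithin] with t ht
        simpa using ht
    have h0' : Tendsto (fun t : ℝ => h' t / t) (𝓝[≠] (0:ℝ)) (𝓝 0) := by
      have h2 := h0.comp hnegt
      refine h2.congr fun t => ?_
      show h (-t) / (-t) = h' t / t
      rw [div_neg, ← neg_div]
    have h3pos' : MonotoneOn
        (fun t : ℝ => (h' t * t - 2 * H' t) / (|t| ^ (5:ℕ) * t)) (Set.Ioi 0) := by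
      have hrw : ∀ t : ℝ, (h' t * t - 2 * H' t) / (|t| ^ (5:ℕ) * t)
          = -((h (-t) * (-t) - 2 * H (-t)) / (|(-t)| ^ (5:ℕ) * (-t))) := by
        intro t
        have hden : |(-t)| ^ (5:ℕ) * (-t) = -(|t| ^ (5:ℕ) * t) := by
          rw [abs_neg]; ring
        rw [hden, div_neg, neg_neg]
        congr 1
        show -h (-t) * t - 2 * H (-t) = h (-t) * (-t) - 2 * H (-t)
        ring
      intro a ha b hb hab
      simp only [hrw]
      have hna : -b ∈ Set.Iio (0:ℝ) := by simpa using (Set.mem_Ioi.1 hb)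
      have hnb : -a ∈ Set.Iio (0:ℝ) := by simpa using (Set.mem_Ioi.1 ha)
      have := h3neg hna hnb (by linarith)
      linarith
    have hres := key h' H' hcont' hHrefl h0' h3pos' (show (0:ℝ) < -s by linarith)
    simp only [hh', hH'def, neg_neg] at hres
    linarith
  · rw [hH 0, intervalIntegral.integral_same]
    simp
  · exact key h H hcont hH h0 h3pos hpos
end

section
/- Let h : ℝ → ℝ be continuous with H(t) = ∫_0^t h(τ) dτ, and suppose there are real numbers 0 < μ₁ ≤ μ₂ < 6 such that 0 < μ₁ H(t) ≤ h(t)t ≤ μ₂ H(t) for all t ≠ 0. Then H(t)/|t|^6 → +∞ as t → 0; equivalently, for every K > 0 there exists δ > 0 such that H(t) ≥ K|t|^6 whenever 0 < |t| ≤ δ. -/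
/-!
The growth condition `h t * t ≤ μ₂ * H t` says exactly that `H t * |t| ^ (-μ₂)` is nonincreasing
in `|t|` on each half-line, so `H t ≥ c |t| ^ μ₂` for `0 < |t| ≤ 1`, where `c = min (H 1) (H (-1))`
is positive because `H > 0` away from `0`. Since `μ₂ < 6`, `c |t| ^ μ₂ / |t| ^ 6 → ∞`.
-/

open Filter Topology

theorem antitoneOn_mul_rpow_neg {H h : ℝ → ℝ} {μ : ℝ}
    (hderiv : ∀ t, 0 < t → HasDerivAt H (h t) t) (hle : ∀ t, 0 < t → h t * t ≤ μ * H t) :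
    AntitoneOn (fun t => H t * t ^ (-μ)) (Set.Ioi 0) := by
  have hderiv' : ∀ t, 0 < t →
      HasDerivAt (fun t => H t * t ^ (-μ)) (h t * t ^ (-μ) + H t * (-μ * t ^ (-μ - 1))) t :=
    fun t ht => (hderiv t ht).mul (Real.hasDerivAt_rpow_const (Or.inl ht.ne'))
  refine antitoneOn_of_hasDerivWithinAt_nonpos (convex_Ioi 0)
    (fun t ht => (hderiv' t ht).continuousAt.continuousWithinAt)
    (fun t ht => (hderiv' t (by simpa using ht)).hasDerivWithinAt) fun t ht => ?_
  rw [interior_Ioi, Set.mem_Ioi] at ht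
  have hsplit : t ^ (-μ) = t * t ^ (-μ - 1) := by
    conv_lhs => rw [show -μ = 1 + (-μ - 1) by ring, Real.rpow_add ht, Real.rpow_one]
  calc h t * t ^ (-μ) + H t * (-μ * t ^ (-μ - 1))
      = (h t * t - μ * H t) * t ^ (-μ - 1) := by rw [hsplit]; ring
    _ ≤ 0 := mul_nonpos_of_nonpos_of_nonneg (sub_nonpos.2 (hle t ht)) (by positivity)

theorem mul_rpow_le_of_deriv_mul_le {H h : ℝ → ℝ} {μ : ℝ}
    (hderiv : ∀ t, 0 < t → HasDerivAt H (h t) t) (hle : ∀ t, 0 < t → h t * t ≤ μ * H t)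
    {t : ℝ} (ht : 0 < t) (ht1 : t ≤ 1) : H 1 * t ^ μ ≤ H t := by
  have hmono := antitoneOn_mul_rpow_neg hderiv hle ht (Set.mem_Ioi.2 one_pos) ht1
  simp only [Real.one_rpow, mul_one] at hmono
  calc H 1 * t ^ μ ≤ H t * t ^ (-μ) * t ^ μ := mul_le_mul_of_nonneg_right hmono (by positivity)
    _ = H t := by rw [mul_assoc, ← Real.rpow_add ht, neg_add_cancel, Real.rpow_zero, mul_one]

theorem min_mul_abs_rpow_le {H h : ℝ → ℝ} {μ : ℝ}
    (hderiv : ∀ t, HasDerivAt H (h t) t) (hle : ∀ t, t ≠ 0 → h t * t ≤ μ * H t)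
    {t : ℝ} (ht : t ≠ 0) (ht1 : |t| ≤ 1) : min (H 1) (H (-1)) * |t| ^ μ ≤ H t := by
  rcases ht.lt_or_gt with hneg | hpos
  · have hderiv_neg : ∀ s, HasDerivAt (fun s => H (-s)) (-h (-s)) s := fun s => by
      simpa [Function.comp_def] using (hderiv (-s)).comp s (hasDerivAt_neg s)
    have hbound := mul_rpow_le_of_deriv_mul_le (fun s _ => hderiv_neg s)
      (fun s hs => by simpa only [neg_mul_comm] using hle (-s) (neg_ne_zero.2 hs.ne'))
      (neg_pos.2 hneg) (by rwa [abs_of_neg hneg] at ht1)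
    rw [neg_neg, ← abs_of_neg hneg] at hbound
    exact (mul_le_mul_of_nonneg_right (min_le_right _ _) (by positivity)).trans hbound
  · have hbound := mul_rpow_le_of_deriv_mul_le (fun s _ => hderiv s) (fun s hs => hle s hs.ne')
      hpos (by rwa [abs_of_pos hpos] at ht1)
    rw [abs_of_pos hpos]
    exact (mul_le_mul_of_nonneg_right (min_le_left _ _) (by positivity)).trans hbound

theorem tendsto_div_abs_pow_atTop_of_le {H : ℝ → ℝ} {c μ : ℝ} {n : ℕ} (hc : 0 < c)
    (hμ : μ < n) (hH : ∀ᶠ t in 𝓝[≠] 0, c * |t| ^ μ ≤ H t) :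
    Tendsto (fun t => H t / |t| ^ n) (𝓝[≠] 0) atTop := by
  have hlim : Tendsto (fun t => c * |t| ^ (μ - n)) (𝓝[≠] 0) atTop :=
    ((tendsto_rpow_neg_nhdsGT_zero (sub_neg.2 hμ)).comp tendsto_abs_nhdsNE_zero).const_mul_atTop hc
  refine tendsto_atTop_mono' _ ?_ hlim
  filter_upwards [hH, self_mem_nhdsWithin] with t hHt (ht : t ≠ 0)
  have habs : 0 < |t| := abs_pos.2 ht
  rwa [le_div_iff₀ (by positivity), Real.rpow_sub habs, Real.rpow_natCast, mul_div_assoc',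
    div_mul_cancel₀ _ (by positivity)]

theorem exists_forall_abs_le_of_tendsto_nhdsNE {f : ℝ → ℝ} (hf : Tendsto f (𝓝[≠] 0) atTop)
    (K : ℝ) : ∃ δ, 0 < δ ∧ ∀ t, 0 < |t| → |t| ≤ δ → K ≤ f t := by
  obtain ⟨ε, hε, hball⟩ := Metric.mem_nhdsWithin_iff.1 (hf.eventually_ge_atTop K)
  refine ⟨ε / 2, half_pos hε, fun t ht htδ => hball ⟨?_, abs_pos.1 ht⟩⟩
  rw [Metric.mem_ball, Real.dist_0_eq_abs]
  linarith

theorem stmt_14_general (h H : ℝ → ℝ) (hcont : Continuous h)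
    (hH : ∀ t : ℝ, H t = ∫ τ in (0:ℝ)..t, h τ)
    (μ₁ μ₂ : ℝ) (hμ₁ : 0 < μ₁) (hμ₂ : μ₂ < 6)
    (hgrowth : ∀ t : ℝ, t ≠ 0 →
      0 < μ₁ * H t ∧ μ₁ * H t ≤ h t * t ∧ h t * t ≤ μ₂ * H t) :
    Tendsto (fun t : ℝ => H t / |t| ^ (6:ℕ)) (𝓝[≠] 0) atTop
    ∧ ∀ K : ℝ, 0 < K → ∃ δ : ℝ, 0 < δ ∧ ∀ t : ℝ, 0 < |t| → |t| ≤ δ →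
        K * |t| ^ (6:ℕ) ≤ H t := by
  have hderiv : ∀ t, HasDerivAt H (h t) t := fun t => by
    rw [funext hH]
    exact (hcont.integral_hasStrictDerivAt 0 t).hasDerivAt
  have hHpos : ∀ t, t ≠ 0 → 0 < H t := fun t ht => pos_of_mul_pos_right (hgrowth t ht).1 hμ₁.le
  have hc : 0 < min (H 1) (H (-1)) := lt_min (hHpos 1 one_ne_zero) (hHpos (-1) (by norm_num))
  have hlower : ∀ᶠ t in 𝓝[≠] 0, min (H 1) (H (-1)) * |t| ^ μ₂ ≤ H t := by
    have hnear : ∀ᶠ t in 𝓝 (0:ℝ), |t| ≤ 1 :=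
      Metric.eventually_nhds_iff.2 ⟨1, one_pos, fun t ht => by simpa using ht.le⟩
    filter_upwards [self_mem_nhdsWithin, nhdsWithin_le_nhds hnear] with t ht ht1
    exact min_mul_abs_rpow_le hderiv (fun t ht => (hgrowth t ht).2.2) ht ht1
  have hlim := tendsto_div_abs_pow_atTop_of_le (n := 6) hc (by norm_num [hμ₂]) hlower
  refine ⟨hlim, fun K _ => ?_⟩
  obtain ⟨δ, hδ, hK⟩ := exists_forall_abs_le_of_tendsto_nhdsNE hlim K
  exact ⟨δ, hδ, fun t ht htδ => (le_div_iff₀ (by positivity)).1 (hK t ht htδ)⟩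

/-- For a mass-subcritical nonlinearity (`μ₂ < 6`), `H(t)/|t|^6 → +∞` as `t → 0`. -/
theorem stmt_14 (h H : ℝ → ℝ) (hcont : Continuous h)
    (hH : ∀ t : ℝ, H t = ∫ τ in (0:ℝ)..t, h τ)
    (μ₁ μ₂ : ℝ) (hμ₁ : 0 < μ₁) (hμ : μ₁ ≤ μ₂) (hμ₂ : μ₂ < 6)
    (hgrowth : ∀ t : ℝ, t ≠ 0 →
      0 < μ₁ * H t ∧ μ₁ * H t ≤ h t * t ∧ h t * t ≤ μ₂ * H t) :
    Tendsto (fun t : ℝ => H t / |t| ^ (6:ℕ)) (𝓝[≠] 0) atTop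
    ∧ ∀ K : ℝ, 0 < K → ∃ δ : ℝ, 0 < δ ∧ ∀ t : ℝ, 0 < |t| → |t| ≤ δ →
        K * |t| ^ (6:ℕ) ≤ H t :=
  stmt_14_general h H hcont hH μ₁ μ₂ hμ₁ hμ₂ hgrowth
end

section
/- Let ζ₀ > 0 and let h : ℝ → ℝ be continuous with H(t) = ∫_0^t h(τ) dτ. Assume h(t)/t^5 → 0 as t → 0, and |h(t)|/exp(ζ t⁴) → 0 as |t| → ∞ for every ζ > ζ₀. Then for every ζ > ζ₀ and every ε > 0 there exist constants C_ε > 0 and C̄_ε > 0 such that for all t ∈ ℝ: h(t)t ≤ ε|t|^6 + C_ε|t|^6 (exp(ζ t⁴) − 1) and H(t) ≤ (ε/4)|t|^6 + C̄_ε|t|^6 (exp(ζ t⁴) − 1). -/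
open Filter Topology


lemma key_bound (ζ : ℝ) (hζ : 0 < ζ) (h : ℝ → ℝ) (hcont : Continuous h)
    (h0 : Tendsto (fun t : ℝ => h t / t ^ (5:ℕ)) (𝓝[≠] 0) (𝓝 0))
    (hcritζ : Tendsto (fun t : ℝ => |h t| / Real.exp (ζ * t ^ (4:ℕ))) (cocompact ℝ) (𝓝 0))
    (ε : ℝ) (hε : 0 < ε) :
    ∃ C : ℝ, 0 < C ∧ ∀ t : ℝ,
      |h t| ≤ ε * |t| ^ (5:ℕ) + C * |t| ^ (5:ℕ) * (Real.exp (ζ * t ^ (4:ℕ)) - 1) := by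
  -- h 0 = 0
  have h00 : h 0 = 0 := by
    have h1 : Tendsto (fun t : ℝ => t ^ (5:ℕ)) (𝓝[≠] (0:ℝ)) (𝓝 0) := by
      have := (continuous_pow 5 (M := ℝ)).tendsto 0
      simpa using this.mono_left nhdsWithin_le_nhds
    have h2 : Tendsto (fun t : ℝ => h t / t ^ (5:ℕ) * t ^ (5:ℕ)) (𝓝[≠] (0:ℝ)) (𝓝 0) := by
      simpa using h0.mul h1
    have h3 : Tendsto h (𝓝[≠] (0:ℝ)) (𝓝 0) := by
      refine h2.congr' ?_
      filter_upwards [self_mem_nhdsWithin] with t ht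
      have : (t : ℝ) ^ (5:ℕ) ≠ 0 := pow_ne_zero _ ht
      exact div_mul_cancel₀ (h t) this
    have h4 : Tendsto h (𝓝[≠] (0:ℝ)) (𝓝 (h 0)) :=
      (hcont.tendsto 0).mono_left nhdsWithin_le_nhds
    exact tendsto_nhds_unique h4 h3
  -- small δ
  have hsmall : ∀ᶠ t in 𝓝[≠] (0:ℝ), |h t| ≤ ε * |t| ^ (5:ℕ) := by
    filter_upwards [Metric.tendsto_nhds.mp h0 ε hε, self_mem_nhdsWithin] with t h1 h2
    have ht5 : (0:ℝ) < |t| ^ (5:ℕ) := pow_pos (abs_pos.2 h2) 5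
    have h1' : |h t| / |t| ^ (5:ℕ) < ε := by
      rw [Real.dist_eq, sub_zero, abs_div, abs_pow] at h1
      exact h1
    exact ((div_lt_iff₀ ht5).1 h1').le
  rw [eventually_nhdsWithin_iff, Metric.eventually_nhds_iff] at hsmall
  obtain ⟨δ, hδpos, hδ⟩ := hsmall
  -- big R
  have hc₀ : (0:ℝ) < 1 - Real.exp (-ζ) := by
    have : Real.exp (-ζ) < 1 := Real.exp_lt_one_iff.2 (by linarith)
    linarith
  have hbig : ∀ᶠ t in cocompact ℝ,
      |h t| / Real.exp (ζ * t ^ (4:ℕ)) < 1 - Real.exp (-ζ) := by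
    have := Metric.tendsto_nhds.mp hcritζ _ hc₀
    filter_upwards [this] with t ht
    rw [Real.dist_eq, sub_zero] at ht
    exact (le_abs_self (|h t| / Real.exp (ζ * t ^ (4:ℕ)))).trans_lt ht
  rw [cocompact_eq_atBot_atTop, eventually_sup, eventually_atBot, eventually_atTop] at hbig
  obtain ⟨⟨R₁, hR₁⟩, ⟨R₂, hR₂⟩⟩ := hbig
  set R' : ℝ := max (max |R₁| |R₂|) 1 with hR'def
  have hR'1 : (1:ℝ) ≤ R' := le_max_right _ _
  -- bound on compact
  obtain ⟨M, hM⟩ := (isCompact_Icc (a := -R') (b := R')).exists_bound_of_continuousOn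
    hcont.continuousOn
  -- constants
  set δ' : ℝ := min (δ/2) 1 with hδ'def
  have hδ'pos : 0 < δ' := lt_min (by linarith) one_pos
  set c : ℝ := δ' ^ (5:ℕ) * (Real.exp (ζ * δ' ^ (4:ℕ)) - 1) with hcdef
  have hcpos : 0 < c := by
    have : 1 < Real.exp (ζ * δ' ^ (4:ℕ)) := by
      rw [Real.one_lt_exp_iff]; positivity
    have h5 : (0:ℝ) < δ' ^ (5:ℕ) := by positivity
    nlinarith
  refine ⟨max (M / c) 1, lt_of_lt_of_le one_pos (le_max_right _ _), fun t => ?_⟩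
  have hexp1 : 1 ≤ Real.exp (ζ * t ^ (4:ℕ)) := by
    rw [Real.one_le_exp_iff]; positivity
  rcases le_or_gt |t| δ' with hcase | hcase
  · -- near zero
    rcases eq_or_ne t 0 with rfl | ht0
    · simp [h00]
    · have hlt : dist t 0 < δ := by
        rw [Real.dist_eq, sub_zero]
        calc |t| ≤ δ' := hcase
          _ ≤ δ / 2 := min_le_left _ _
          _ < δ := by linarith
      have := hδ hlt ht0
      have hpos : 0 ≤ max (M / c) 1 * |t| ^ (5:ℕ) * (Real.exp (ζ * t ^ (4:ℕ)) - 1) := by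
        have hc1 : (0:ℝ) ≤ max (M / c) 1 := le_trans one_pos.le (le_max_right _ _)
        have h5 : (0:ℝ) ≤ |t| ^ (5:ℕ) := by positivity
        exact mul_nonneg (mul_nonneg hc1 h5) (by linarith)
      linarith
  · rcases le_or_gt |t| R' with hcase2 | hcase2
    · -- middle range
      have htI : t ∈ Set.Icc (-R') R' := by
        constructor <;> [skip; skip] <;> cases' abs_le.1 hcase2 with h1 h2 <;> linarith
      have hMt : |h t| ≤ M := by
        have := hM t htI
        rwa [Real.norm_eq_abs] at this
      have hMnn : 0 ≤ M := le_trans (abs_nonneg _) hMt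
      have hmono : c ≤ |t| ^ (5:ℕ) * (Real.exp (ζ * t ^ (4:ℕ)) - 1) := by
        rw [hcdef]
        have h4 : δ' ^ (4:ℕ) ≤ t ^ (4:ℕ) := by
          calc δ' ^ (4:ℕ) ≤ |t| ^ (4:ℕ) := pow_le_pow_left₀ hδ'pos.le hcase.le 4
            _ = t ^ (4:ℕ) := by rw [← abs_pow, abs_of_nonneg (by positivity)]
        have h5 : δ' ^ (5:ℕ) ≤ |t| ^ (5:ℕ) := pow_le_pow_left₀ hδ'pos.le hcase.le 5
        have hexpm : Real.exp (ζ * δ' ^ (4:ℕ)) ≤ Real.exp (ζ * t ^ (4:ℕ)) :=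
          Real.exp_le_exp.2 (mul_le_mul_of_nonneg_left h4 hζ.le)
        have hem : 1 ≤ Real.exp (ζ * δ' ^ (4:ℕ)) := by
          rw [Real.one_le_exp_iff]; positivity
        calc δ' ^ (5:ℕ) * (Real.exp (ζ * δ' ^ (4:ℕ)) - 1)
            ≤ |t| ^ (5:ℕ) * (Real.exp (ζ * δ' ^ (4:ℕ)) - 1) :=
              mul_le_mul_of_nonneg_right h5 (by linarith)
          _ ≤ |t| ^ (5:ℕ) * (Real.exp (ζ * t ^ (4:ℕ)) - 1) :=
              mul_le_mul_of_nonneg_left (by linarith) (by positivity)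
      have hMc : M ≤ max (M / c) 1 * c := by
        have : M / c ≤ max (M / c) 1 := le_max_left _ _
        calc M = M / c * c := by field_simp
          _ ≤ max (M / c) 1 * c := mul_le_mul_of_nonneg_right this hcpos.le
      have h5 : (0:ℝ) ≤ ε * |t| ^ (5:ℕ) := by positivity
      have hCnn : (0:ℝ) ≤ max (M / c) 1 := le_trans one_pos.le (le_max_right _ _)
      calc |h t| ≤ M := hMt
        _ ≤ max (M / c) 1 * c := hMc
        _ ≤ max (M / c) 1 * (|t| ^ (5:ℕ) * (Real.exp (ζ * t ^ (4:ℕ)) - 1)) :=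
            mul_le_mul_of_nonneg_left hmono hCnn
        _ ≤ _ := by nlinarith
    · -- far away
      have hfar : |h t| / Real.exp (ζ * t ^ (4:ℕ)) < 1 - Real.exp (-ζ) := by
        rcases le_or_gt 0 t with ht | ht
        · refine hR₂ t ?_
          rw [abs_of_nonneg ht] at hcase2
          have h1 : R₂ ≤ R' := le_trans (le_abs_self R₂)
            (le_trans (le_max_right _ _) (le_max_left _ _))
          linarith
        · refine hR₁ t ?_
          rw [abs_of_neg ht] at hcase2
          have : |R₁| < -t := lt_of_le_of_lt (le_trans (le_max_left _ _) (le_max_left _ _)) hcase2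
          have := neg_le_abs R₁
          linarith
      have hexppos : (0:ℝ) < Real.exp (ζ * t ^ (4:ℕ)) := Real.exp_pos _
      have hfar' : |h t| ≤ (1 - Real.exp (-ζ)) * Real.exp (ζ * t ^ (4:ℕ)) :=
        ((div_lt_iff₀ hexppos).1 hfar).le
      have ht1 : (1:ℝ) ≤ |t| := le_trans hR'1 hcase2.le
      have ht4 : (1:ℝ) ≤ t ^ (4:ℕ) := by
        have := pow_le_pow_left₀ (by norm_num : (0:ℝ) ≤ 1) ht1 4
        calc (1:ℝ) = 1 ^ (4:ℕ) := by norm_num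
          _ ≤ |t| ^ (4:ℕ) := this
          _ = t ^ (4:ℕ) := by rw [← abs_pow, abs_of_nonneg (by positivity)]
      have ht5 : (1:ℝ) ≤ |t| ^ (5:ℕ) := by
        calc (1:ℝ) = 1 ^ (5:ℕ) := by norm_num
          _ ≤ |t| ^ (5:ℕ) := pow_le_pow_left₀ (by norm_num) ht1 5
      have hkey : (1 - Real.exp (-ζ)) * Real.exp (ζ * t ^ (4:ℕ))
          ≤ Real.exp (ζ * t ^ (4:ℕ)) - 1 := by
        have he : Real.exp (ζ * t ^ (4:ℕ)) * Real.exp (-ζ)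
            = Real.exp (ζ * t ^ (4:ℕ) - ζ) := by
          rw [← Real.exp_add]; ring_nf
        have h1 : (1:ℝ) ≤ Real.exp (ζ * t ^ (4:ℕ) - ζ) := by
          rw [Real.one_le_exp_iff]
          nlinarith [mul_nonneg hζ.le (sub_nonneg.2 ht4)]
        nlinarith
      have hCge : (1:ℝ) ≤ max (M / c) 1 := le_max_right _ _
      have hεt : (0:ℝ) ≤ ε * |t| ^ (5:ℕ) := by positivity
      have hen : (0:ℝ) ≤ Real.exp (ζ * t ^ (4:ℕ)) - 1 := by linarith
      calc |h t| ≤ (1 - Real.exp (-ζ)) * Real.exp (ζ * t ^ (4:ℕ)) := hfar'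
        _ ≤ Real.exp (ζ * t ^ (4:ℕ)) - 1 := hkey
        _ ≤ |t| ^ (5:ℕ) * (Real.exp (ζ * t ^ (4:ℕ)) - 1) := by nlinarith
        _ ≤ _ := by
          nlinarith [mul_nonneg (mul_nonneg (sub_nonneg.2 hCge)
            (pow_nonneg (abs_nonneg t) 5)) hen]

/-- The exponential growth estimates for a nonlinearity of critical exponential
growth in the sense of Trudinger–Moser. -/
theorem stmt_16 (ζ₀ : ℝ) (hζ₀ : 0 < ζ₀) (h H : ℝ → ℝ) (hcont : Continuous h)
    (hH : ∀ t : ℝ, H t = ∫ τ in (0:ℝ)..t, h τ)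
    (h0 : Tendsto (fun t : ℝ => h t / t ^ (5:ℕ)) (𝓝[≠] 0) (𝓝 0))
    (hcrit : ∀ ζ : ℝ, ζ₀ < ζ →
      Tendsto (fun t : ℝ => |h t| / Real.exp (ζ * t ^ (4:ℕ))) (cocompact ℝ) (𝓝 0)) :
    ∀ ζ : ℝ, ζ₀ < ζ → ∀ ε : ℝ, 0 < ε →
      ∃ C : ℝ, 0 < C ∧ ∃ C' : ℝ, 0 < C' ∧ ∀ t : ℝ,
        h t * t ≤ ε * |t| ^ (6:ℕ) + C * |t| ^ (6:ℕ) * (Real.exp (ζ * t ^ (4:ℕ)) - 1)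
        ∧ H t ≤ ε / 4 * |t| ^ (6:ℕ) + C' * |t| ^ (6:ℕ) * (Real.exp (ζ * t ^ (4:ℕ)) - 1) := by
  intro ζ hζ ε hε
  have hζpos : 0 < ζ := hζ₀.trans hζ
  obtain ⟨C, hC, hCb⟩ := key_bound ζ hζpos h hcont h0 (hcrit ζ hζ) ε hε
  obtain ⟨C', hC', hC'b⟩ := key_bound ζ hζpos h hcont h0 (hcrit ζ hζ) (ε/4) (by positivity)
  refine ⟨C, hC, C', hC', fun t => ⟨?_, ?_⟩⟩
  · calc h t * t ≤ |h t * t| := le_abs_self _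
      _ = |h t| * |t| := abs_mul _ _
      _ ≤ (ε * |t| ^ (5:ℕ) + C * |t| ^ (5:ℕ) * (Real.exp (ζ * t ^ (4:ℕ)) - 1)) * |t| :=
          mul_le_mul_of_nonneg_right (hCb t) (abs_nonneg t)
      _ = ε * |t| ^ (6:ℕ) + C * |t| ^ (6:ℕ) * (Real.exp (ζ * t ^ (4:ℕ)) - 1) := by ring
  · set B : ℝ := ε / 4 * |t| ^ (5:ℕ) + C' * |t| ^ (5:ℕ) * (Real.exp (ζ * t ^ (4:ℕ)) - 1)
      with hBdef
    have hb : ∀ τ ∈ Set.uIoc (0:ℝ) t, ‖h τ‖ ≤ B := by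
      intro τ hτ
      have hτt : |τ| ≤ |t| := by
        rcases hτ with ⟨h1, h2⟩
        rw [abs_le]
        rcases le_total 0 t with hts | hts
        · constructor
          · simp [min_def, hts] at h1
            have := abs_nonneg t
            linarith
          · simp [max_def, hts] at h2
            rw [abs_of_nonneg hts]; linarith
        · constructor
          · simp [min_def, hts] at h1
            rw [abs_of_nonpos hts]; linarith
          · simp [max_def, hts] at h2
            have := abs_nonneg t
            linarith
      have h5 : |τ| ^ (5:ℕ) ≤ |t| ^ (5:ℕ) := pow_le_pow_left₀ (abs_nonneg _) hτt 5
      have h4 : τ ^ (4:ℕ) ≤ t ^ (4:ℕ) := by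
        have := pow_le_pow_left₀ (abs_nonneg τ) hτt 4
        rw [← abs_pow, ← abs_pow] at this
        rwa [abs_of_nonneg (by positivity : (0:ℝ) ≤ τ ^ (4:ℕ)),
          abs_of_nonneg (by positivity : (0:ℝ) ≤ t ^ (4:ℕ))] at this
      have hexp : Real.exp (ζ * τ ^ (4:ℕ)) ≤ Real.exp (ζ * t ^ (4:ℕ)) :=
        Real.exp_le_exp.2 (mul_le_mul_of_nonneg_left h4 hζpos.le)
      have hexp1 : 1 ≤ Real.exp (ζ * τ ^ (4:ℕ)) := by
        rw [Real.one_le_exp_iff]; positivity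
      rw [Real.norm_eq_abs]
      refine (hC'b τ).trans ?_
      rw [hBdef]
      have e1 : ε / 4 * |τ| ^ (5:ℕ) ≤ ε / 4 * |t| ^ (5:ℕ) :=
        mul_le_mul_of_nonneg_left h5 (by positivity)
      have e2 : C' * |τ| ^ (5:ℕ) * (Real.exp (ζ * τ ^ (4:ℕ)) - 1)
          ≤ C' * |t| ^ (5:ℕ) * (Real.exp (ζ * t ^ (4:ℕ)) - 1) := by
        have hl : C' * |τ| ^ (5:ℕ) ≤ C' * |t| ^ (5:ℕ) :=
          mul_le_mul_of_nonneg_left h5 hC'.le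
        calc C' * |τ| ^ (5:ℕ) * (Real.exp (ζ * τ ^ (4:ℕ)) - 1)
            ≤ C' * |t| ^ (5:ℕ) * (Real.exp (ζ * τ ^ (4:ℕ)) - 1) :=
              mul_le_mul_of_nonneg_right hl (by linarith)
          _ ≤ C' * |t| ^ (5:ℕ) * (Real.exp (ζ * t ^ (4:ℕ)) - 1) :=
              mul_le_mul_of_nonneg_left (by linarith) (by positivity)
      linarith
    have hnorm := intervalIntegral.norm_integral_le_of_norm_le_const hb
    rw [hH t]
    calc (∫ τ in (0:ℝ)..t, h τ) ≤ |∫ τ in (0:ℝ)..t, h τ| := le_abs_self _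
      _ ≤ B * |t| := by
        rw [← Real.norm_eq_abs]
        simpa using hnorm
      _ = ε / 4 * |t| ^ (6:ℕ) + C' * |t| ^ (6:ℕ) * (Real.exp (ζ * t ^ (4:ℕ)) - 1) := by
        rw [hBdef]; ring
end

section
/- The dual function f satisfies lim_{t→0} f(t)/t = 1 and lim_{t→+∞} f(t)/√t = 2^(1/4). -/
open Filter Topology

/-- `g(s) = ∫_0^s √(1 + 2τ²) dτ`, the inverse of the dual function `f`. -/
noncomputable def g (s : ℝ) : ℝ := ∫ τ in (0:ℝ)..s, Real.sqrt (1 + 2 * τ ^ 2)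

/-- The dual function `f = g⁻¹`. -/
noncomputable def f : ℝ → ℝ := Function.invFun g

lemma cont_integrand : Continuous (fun τ : ℝ => Real.sqrt (1 + 2 * τ ^ 2)) := by
  exact (continuous_const.add (continuous_const.mul (continuous_pow 2))).sqrt

lemma hasDerivAt_g (s : ℝ) : HasDerivAt g (Real.sqrt (1 + 2 * s ^ 2)) s := by
  exact (cont_integrand.integral_hasStrictDerivAt 0 s).hasDerivAt

lemma continuous_g : Continuous g :=
  continuous_iff_continuousAt.2 fun s => (hasDerivAt_g s).continuousAt

lemma one_le_integrand (τ : ℝ) : 1 ≤ Real.sqrt (1 + 2 * τ ^ 2) := by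
  have := Real.sqrt_le_sqrt (show (1:ℝ) ≤ 1 + 2 * τ ^ 2 by nlinarith [sq_nonneg τ])
  simpa using this

lemma g_strictMono : StrictMono g := by
  intro a b hab
  have h : g b - g a = ∫ τ in a..b, Real.sqrt (1 + 2 * τ ^ 2) := by
    rw [g, g]
    exact intervalIntegral.integral_interval_sub_left (μ := MeasureTheory.volume)
      (cont_integrand.intervalIntegrable _ _) (cont_integrand.intervalIntegrable _ _)
  have hlb : b - a ≤ g b - g a := by
    rw [h]
    calc b - a = ∫ _ in a..b, (1:ℝ) := by simp
    _ ≤ ∫ τ in a..b, Real.sqrt (1 + 2 * τ ^ 2) := intervalIntegral.integral_mono_on hab.le intervalIntegrable_const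
        (cont_integrand.intervalIntegrable _ _) (fun x _ => one_le_integrand x)
  linarith

lemma g_zero : g 0 = 0 := intervalIntegral.integral_same

lemma g_lower {s : ℝ} (hs : 0 ≤ s) : Real.sqrt 2 * s ^ 2 / 2 ≤ g s := by
  have h : ∫ τ in (0:ℝ)..s, Real.sqrt 2 * τ ≤ g s := by
    apply intervalIntegral.integral_mono_on hs
      ((continuous_const.mul continuous_id).intervalIntegrable _ _)
      (cont_integrand.intervalIntegrable _ _)
    intro x hx
    have hx0 : 0 ≤ x := hx.1
    calc Real.sqrt 2 * x = Real.sqrt 2 * Real.sqrt (x ^ 2) := by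
          rw [Real.sqrt_sq hx0]
      _ = Real.sqrt (2 * x ^ 2) := (Real.sqrt_mul (by norm_num) _).symm
      _ ≤ Real.sqrt (1 + 2 * x ^ 2) := Real.sqrt_le_sqrt (by linarith)
  calc Real.sqrt 2 * s ^ 2 / 2 = ∫ τ in (0:ℝ)..s, Real.sqrt 2 * τ := by
        rw [intervalIntegral.integral_const_mul, integral_id]; ring
    _ ≤ g s := h

lemma g_upper {s : ℝ} (hs : 0 ≤ s) : g s ≤ Real.sqrt 2 * s ^ 2 / 2 + s := by
  have h : g s ≤ ∫ τ in (0:ℝ)..s, (1 + Real.sqrt 2 * τ) := by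
    apply intervalIntegral.integral_mono_on hs (cont_integrand.intervalIntegrable _ _)
      ((continuous_const.add (continuous_const.mul continuous_id)).intervalIntegrable _ _)
    intro x hx
    have hx0 : 0 ≤ x := hx.1
    have h2 : Real.sqrt 2 * Real.sqrt 2 = 2 := Real.mul_self_sqrt (by norm_num)
    have hnn : 0 ≤ 1 + Real.sqrt 2 * x :=
      add_nonneg one_pos.le (mul_nonneg (Real.sqrt_nonneg 2) hx0)
    calc Real.sqrt (1 + 2 * x ^ 2) ≤ Real.sqrt ((1 + Real.sqrt 2 * x) ^ 2) :=
          Real.sqrt_le_sqrt (by nlinarith [Real.sqrt_nonneg 2])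
      _ = 1 + Real.sqrt 2 * x := Real.sqrt_sq hnn
  have hint : (∫ τ in (0:ℝ)..s, (1 + Real.sqrt 2 * τ))
      = (∫ _ in (0:ℝ)..s, (1:ℝ)) + ∫ τ in (0:ℝ)..s, Real.sqrt 2 * τ :=
    intervalIntegral.integral_add intervalIntegrable_const
      ((continuous_const.mul continuous_id).intervalIntegrable _ _)
  rw [hint, intervalIntegral.integral_const_mul, integral_id] at h
  simp at h
  linarith

lemma g_tendsto_atTop : Tendsto g atTop atTop := by
  apply tendsto_atTop_mono' _ _ tendsto_id
  filter_upwards [eventually_ge_atTop (0:ℝ)] with s hs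
  have h := g_strictMono.monotone hs
  rw [g_zero] at h
  -- need s ≤ g s : from integral ≥ ∫ 1 = s
  have hub : s = ∫ _ in (0:ℝ)..s, (1:ℝ) := by simp
  calc (id s : ℝ) = ∫ _ in (0:ℝ)..s, (1:ℝ) := by simpa using hub
    _ ≤ g s := intervalIntegral.integral_mono_on hs intervalIntegrable_const
        (cont_integrand.intervalIntegrable _ _) (fun x _ => one_le_integrand x)

lemma g_tendsto_atBot : Tendsto g atBot atBot := by
  apply tendsto_atBot_mono' _ _ tendsto_id
  filter_upwards [eventually_le_atBot (0:ℝ)] with s hs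
  have : g s ≤ s := by
    have : ∫ _ in s..(0:ℝ), (1:ℝ) ≤ ∫ τ in s..(0:ℝ), Real.sqrt (1 + 2 * τ ^ 2) :=
      intervalIntegral.integral_mono_on hs intervalIntegrable_const
        (cont_integrand.intervalIntegrable _ _) (fun x _ => one_le_integrand x)
    rw [intervalIntegral.integral_const] at this
    have hswap : (∫ τ in s..(0:ℝ), Real.sqrt (1 + 2 * τ ^ 2)) = -g s := by
      rw [g, intervalIntegral.integral_symm]
    rw [hswap] at this
    simp at this
    linarith
  simpa using this

lemma g_surj : Function.Surjective g :=
  continuous_g.surjective g_tendsto_atTop g_tendsto_atBot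

lemma f_left (s : ℝ) : f (g s) = s :=
  Function.leftInverse_invFun g_strictMono.injective s

lemma f_right (t : ℝ) : g (f t) = t :=
  Function.rightInverse_invFun g_surj t

lemma f_zero : f 0 = 0 := by have := f_left 0; rwa [g_zero] at this

lemma f_strictMono : StrictMono f := by
  intro a b hab
  by_contra h
  push_neg at h
  have := g_strictMono.monotone h
  rw [f_right, f_right] at this
  exact absurd this (not_le.2 hab)

lemma f_continuous : Continuous f :=
  f_strictMono.monotone.continuous_of_surjective
    (fun s => ⟨g s, f_left s⟩)

lemma f_tendsto_atTop : Tendsto f atTop atTop :=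
  f_strictMono.monotone.tendsto_atTop_atTop fun b => ⟨g b, (f_left b).ge⟩

lemma hasDerivAt_f_zero : HasDerivAt f 1 0 := by
  have h1 : HasDerivAt g 1 (f 0) := by
    rw [f_zero]
    simpa using hasDerivAt_g 0
  have := HasDerivAt.of_local_left_inverse f_continuous.continuousAt h1 one_ne_zero
    (Eventually.of_forall f_right)
  simpa using this

lemma part1 : Tendsto (fun t : ℝ => f t / t) (𝓝[≠] 0) (𝓝 1) := by
  have := hasDerivAt_iff_tendsto_slope.1 hasDerivAt_f_zero
  apply this.congr
  intro t
  simp [slope_def_field, f_zero]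

lemma g_div_sq : Tendsto (fun s : ℝ => g s / s ^ 2) atTop (𝓝 (Real.sqrt 2 / 2)) := by
  have hsqueeze : Tendsto (fun s : ℝ => Real.sqrt 2 / 2 + 1 / s) atTop
      (𝓝 (Real.sqrt 2 / 2)) := by
    have h := ((tendsto_const_nhds : Tendsto (fun _ : ℝ => Real.sqrt 2 / 2) atTop
      (𝓝 (Real.sqrt 2 / 2))).add tendsto_inv_atTop_zero)
    simpa [one_div] using h
  apply tendsto_of_tendsto_of_tendsto_of_le_of_le' tendsto_const_nhds hsqueeze
  · filter_upwards [eventually_ge_atTop (1:ℝ)] with s hs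
    have hs0 : (0:ℝ) < s := by linarith
    rw [le_div_iff₀ (by positivity)]
    have := g_lower hs0.le
    linarith
  · filter_upwards [eventually_ge_atTop (1:ℝ)] with s hs
    have hs0 : (0:ℝ) < s := by linarith
    rw [div_le_iff₀ (by positivity)]
    have := g_upper hs0.le
    have h1 : (Real.sqrt 2 / 2 + 1 / s) * s ^ 2 = Real.sqrt 2 * s ^ 2 / 2 + s := by
      field_simp
    linarith

lemma sqrt2_div2_pos : (0:ℝ) < Real.sqrt 2 / 2 := by positivity

lemma const_eq : (Real.sqrt (Real.sqrt 2 / 2))⁻¹ = (2:ℝ) ^ ((1:ℝ) / 4) := by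
  have e1 : Real.sqrt 2 / 2 = (2:ℝ) ^ (-(1:ℝ)/2) := by
    rw [show (-(1:ℝ)/2) = (1:ℝ)/2 + (-1) by norm_num, Real.rpow_add (by norm_num),
      Real.rpow_neg_one, ← Real.sqrt_eq_rpow]
    ring
  rw [e1, Real.sqrt_eq_rpow, ← Real.rpow_mul (by norm_num : (0:ℝ) ≤ 2),
    show (-(1:ℝ)/2 * (1/2)) = -((1:ℝ)/4) by norm_num,
    Real.rpow_neg (by norm_num : (0:ℝ) ≤ 2), inv_inv]

lemma s_div_sqrt : Tendsto (fun s : ℝ => s / Real.sqrt (g s)) atTop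
    (𝓝 ((2:ℝ) ^ ((1:ℝ) / 4))) := by
  have h1 : Tendsto (fun s : ℝ => (Real.sqrt (g s / s ^ 2))⁻¹) atTop
      (𝓝 ((Real.sqrt (Real.sqrt 2 / 2))⁻¹)) := by
    exact (g_div_sq.sqrt).inv₀ (by positivity)
  rw [const_eq] at h1
  apply h1.congr'
  filter_upwards [eventually_ge_atTop (1:ℝ)] with s hs
  have hs0 : (0:ℝ) < s := by linarith
  have hg0 : (0:ℝ) < g s := by
    have := g_lower hs0.le
    nlinarith [Real.sqrt_nonneg 2, Real.sq_sqrt (show (0:ℝ) ≤ 2 by norm_num),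
      Real.sqrt_pos.2 (show (0:ℝ) < 2 by norm_num)]
  rw [Real.sqrt_div hg0.le, Real.sqrt_sq hs0.le, inv_div]

/-- Asymptotics of the dual function: `f(t)/t → 1` as `t → 0` and
`f(t)/√t → 2^(1/4)` as `t → +∞`. -/
theorem stmt_18 :
    Tendsto (fun t : ℝ => f t / t) (𝓝[≠] 0) (𝓝 1)
    ∧ Tendsto (fun t : ℝ => f t / Real.sqrt t) atTop (𝓝 ((2:ℝ) ^ ((1:ℝ) / 4))) := by
  refine ⟨part1, ?_⟩
  have h := s_div_sqrt.comp f_tendsto_atTop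
  apply h.congr
  intro t
  simp only [Function.comp_apply, f_right t]
end
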